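/- arXiv:2006.12206 — 7 statements merged into one kernel-verified Lean document; each statement's English description precedes it below -/
import Mathlib

section
/- Let q ∈ L¹(ℝ) be complex-valued, and let λ ∈ ℂ with Im λ ≥ 0 and λ ≠ 0. Define the map Φ on bounded measurable functions f : ℝ → ℂ by (Φf)(x) = ∫_x^∞ D(t−x,λ) q(t) f(t) dt. Then for every bounded measurable f and every n ∈ ℕ, the n-fold iterate satisfies sup_{x∈ℝ} |(Φⁿ f)(x)| ≤ (‖q‖_{L¹}/|λ|)ⁿ / n! · sup_{x∈ℝ} |f(x)|. -/
open MeasureTheory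

/-- The kernel `D(y,λ) = (e^{2iλy} - 1)/(2iλ)` for `y > 0`, extended by `0`. -/
noncomputable def D (lam : ℂ) (y : ℝ) : ℂ :=
  if 0 < y then (Complex.exp (2 * Complex.I * lam * y) - 1) / (2 * Complex.I * lam) else 0

/-- The integral operator `(Φ f)(x) = ∫_x^∞ D(t-x,λ) q(t) f(t) dt`. -/
noncomputable def Phi (q : ℝ → ℂ) (lam : ℂ) (f : ℝ → ℂ) : ℝ → ℂ :=
  fun x => ∫ t in Set.Ioi x, D lam (t - x) * q t * f t

/-!
Since `Im λ ≥ 0` we have `|e^{2iλy}| ≤ 1`, hence `|D(y,λ)| ≤ 1/|λ|`. Writing `W(x) = ∫_x^∞ |q|`,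
induction on `n` gives the sharper pointwise bound `|Φⁿ f(x)| ≤ (W(x)/|λ|)ⁿ/n! · C`: the inductive
step is the identity `∫_x^∞ |q(t)| W(t)ⁿ dt = W(x)ⁿ⁺¹/(n+1)` (morally `W' = -|q|`), which is proved
by induction and Fubini on the region `x < t < s`, so that `W` never has to be differentiated.
Finally `W(x) ≤ ‖q‖_{L¹}`.
-/

open Set

noncomputable def tailIntegral (w : ℝ → ℝ) (x : ℝ) : ℝ := ∫ t in Ioi x, w t

section tailIntegral

variable {w : ℝ → ℝ}

lemma tailIntegral_nonneg (hw0 : 0 ≤ w) (x : ℝ) : 0 ≤ tailIntegral w x :=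
  setIntegral_nonneg measurableSet_Ioi fun t _ => hw0 t

lemma tailIntegral_le_integral (hw : Integrable w) (hw0 : 0 ≤ w) (x : ℝ) :
    tailIntegral w x ≤ ∫ t, w t :=
  setIntegral_le_integral hw (ae_of_all _ hw0)

lemma antitone_tailIntegral (hw : Integrable w) (hw0 : 0 ≤ w) : Antitone (tailIntegral w) :=
  fun _ _ hab => setIntegral_mono_set hw.integrableOn (ae_of_all _ hw0)
    (Ioi_subset_Ioi hab).eventuallyLE

lemma integral_Ioo_eq_tailIntegral_sub (hw : Integrable w) {x s : ℝ} (hxs : x ≤ s) :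
    ∫ t in Ioo x s, w t = tailIntegral w x - tailIntegral w s := by
  rw [tailIntegral, tailIntegral, ← Ioc_union_Ioi_eq_Ioi hxs,
    setIntegral_union Ioc_disjoint_Ioi_same measurableSet_Ioi hw.integrableOn hw.integrableOn,
    integral_Ioc_eq_integral_Ioo]
  ring

lemma integrable_mul_tailIntegral_pow (hw : Integrable w) (hw0 : 0 ≤ w) (n : ℕ) :
    Integrable (fun t => w t * tailIntegral w t ^ n) :=
  hw.mul_bdd ((antitone_tailIntegral hw hw0).measurable.pow_const n).aestronglyMeasurable
    (ae_of_all _ fun t => by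
      rw [Real.norm_of_nonneg (pow_nonneg (tailIntegral_nonneg hw0 t) n)]
      exact pow_le_pow_left₀ (tailIntegral_nonneg hw0 t) (tailIntegral_le_integral hw hw0 t) n)

lemma integral_Ioi_mul_tailIntegral {g : ℝ → ℝ} (hg : Integrable g) (hw : Integrable w)
    (x : ℝ) :
    ∫ t in Ioi x, g t * tailIntegral w t = ∫ s in Ioi x, (∫ t in Ioo x s, g t) * w s := by
  set F : ℝ × ℝ → ℝ := {p | p.1 < p.2}.indicator fun p => g p.1 * w p.2
  have hF : Integrable F ((volume.restrict (Ioi x)).prod (volume.restrict (Ioi x))) :=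
    (hg.restrict.mul_prod hw.restrict).indicator (measurableSet_lt measurable_fst measurable_snd)
  convert integral_integral_swap (f := fun t s => F (t, s)) hF using 1
  · refine setIntegral_congr_fun measurableSet_Ioi fun t (ht : x < t) => ?_
    have : (fun s => F (t, s)) = (Ioi t).indicator fun s => g t * w s := by
      ext s; by_cases hs : t < s <;> simp [F, indicator, hs]
    rw [this, integral_indicator measurableSet_Ioi, Measure.restrict_restrict measurableSet_Ioi,
      Ioi_inter_Ioi, sup_of_le_left ht.le, integral_const_mul, tailIntegral]
  · congr 1; ext s
    have : (fun t => F (t, s)) = (Iio s).indicator fun t => g t * w s := by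
      ext t; by_cases ht : t < s <;> simp [F, indicator, ht]
    rw [this, integral_indicator measurableSet_Iio, Measure.restrict_restrict measurableSet_Iio,
      Iio_inter_Ioi, integral_mul_const]

theorem integral_Ioi_mul_tailIntegral_pow (hw : Integrable w) (hw0 : 0 ≤ w) (n : ℕ) (x : ℝ) :
    ∫ t in Ioi x, w t * tailIntegral w t ^ n = tailIntegral w x ^ (n + 1) / (n + 1) := by
  induction n generalizing x with
  | zero => simp [tailIntegral]
  | succ n ih =>
    set W := tailIntegral w
    have hg := integrable_mul_tailIntegral_pow hw hw0 n
    have hinner : ∀ s ∈ Ioi x, (∫ t in Ioo x s, w t * W t ^ n) * w s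
        = W x ^ (n + 1) / (n + 1) * w s - (n + 1 : ℝ)⁻¹ * (w s * W s ^ (n + 1)) := by
      intro s (hs : x < s)
      rw [integral_Ioo_eq_tailIntegral_sub hg hs.le, tailIntegral, tailIntegral, ih, ih]
      ring
    have hswap : ∫ t in Ioi x, w t * W t ^ (n + 1)
        = W x ^ (n + 1) / (n + 1) * W x
          - (n + 1 : ℝ)⁻¹ * ∫ t in Ioi x, w t * W t ^ (n + 1) := calc
      _ = ∫ t in Ioi x, w t * W t ^ n * W t := by simp only [pow_succ, mul_assoc]
      _ = ∫ s in Ioi x, (∫ t in Ioo x s, w t * W t ^ n) * w s :=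
        integral_Ioi_mul_tailIntegral hg hw x
      _ = _ := by
        rw [setIntegral_congr_fun measurableSet_Ioi hinner,
          integral_sub (hw.const_mul _).integrableOn
            ((integrable_mul_tailIntegral_pow hw hw0 (n + 1)).const_mul _).integrableOn,
          integral_const_mul, integral_const_mul]
        rfl
    push_cast
    field_simp at hswap ⊢
    linear_combination hswap

end tailIntegral

lemma norm_D_le {lam : ℂ} (him : 0 ≤ lam.im) (y : ℝ) : ‖D lam y‖ ≤ ‖lam‖⁻¹ := by
  unfold D
  split_ifs with hy
  · have hre : (2 * Complex.I * lam * y).re = -(2 * y * lam.im) := by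
      simp
      ring
    have hexp : ‖Complex.exp (2 * Complex.I * lam * y)‖ ≤ 1 := by
      rw [Complex.norm_exp, hre, Real.exp_le_one_iff, neg_nonpos]
      positivity
    calc ‖(Complex.exp (2 * Complex.I * lam * y) - 1) / (2 * Complex.I * lam)‖
        = ‖Complex.exp (2 * Complex.I * lam * y) - 1‖ / (2 * ‖lam‖) := by simp
      _ ≤ 2 / (2 * ‖lam‖) := by
        gcongr
        exact (norm_sub_le _ _).trans (by rw [norm_one]; linarith)
      _ = ‖lam‖⁻¹ := by rw [div_mul_eq_div_div, div_self two_ne_zero, one_div]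
  · simp

lemma norm_Phi_le {q : ℝ → ℂ} {lam : ℂ} (him : 0 ≤ lam.im) {g : ℝ → ℂ} {h : ℝ → ℝ}
    (hg : ∀ t, ‖g t‖ ≤ h t) (hqh : Integrable fun t => ‖q t‖ * h t) (y : ℝ) :
    ‖Phi q lam g y‖ ≤ ‖lam‖⁻¹ * ∫ t in Ioi y, ‖q t‖ * h t := by
  rw [← integral_const_mul]
  refine norm_integral_le_of_norm_le (hqh.const_mul _).integrableOn (ae_of_all _ fun t => ?_)
  rw [norm_mul, norm_mul, mul_assoc]
  have : 0 ≤ ‖q t‖ * h t := mul_nonneg (norm_nonneg _) ((norm_nonneg _).trans (hg t))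
  gcongr
  · exact norm_D_le him _
  · exact hg t

lemma norm_iterate_Phi_le {q : ℝ → ℂ} (hq : Integrable q) {lam : ℂ} (him : 0 ≤ lam.im)
    {f : ℝ → ℂ} {C : ℝ} (hC : ∀ x, ‖f x‖ ≤ C) (n : ℕ) (x : ℝ) :
    ‖(Phi q lam)^[n] f x‖ ≤ (tailIntegral (‖q ·‖) x / ‖lam‖) ^ n / n.factorial * C := by
  induction n generalizing x with
  | zero => simpa using hC x
  | succ n ih =>
    set W := tailIntegral (‖q ·‖)
    have hW := integrable_mul_tailIntegral_pow hq.norm (fun t => norm_nonneg (q t)) n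
    rw [Function.iterate_succ_apply']
    refine (norm_Phi_le him ih (hW.mul_const (C / ‖lam‖ ^ n / n.factorial) |>.congr
      (ae_of_all _ fun t => by ring)) x).trans_eq ?_
    calc ‖lam‖⁻¹ * ∫ t in Ioi x, ‖q t‖ * ((W t / ‖lam‖) ^ n / n.factorial * C)
        = ‖lam‖⁻¹ * ((∫ t in Ioi x, ‖q t‖ * W t ^ n) * (C / ‖lam‖ ^ n / n.factorial)) := by
          rw [← integral_mul_const]
          congr 2 with t
          ring
      _ = _ := by
        rw [integral_Ioi_mul_tailIntegral_pow hq.norm (fun t => norm_nonneg (q t)),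
          Nat.factorial_succ, mul_comm (n + 1), Nat.cast_mul, ← div_div]
        push_cast
        ring

theorem iterate_Phi_bound_general (q : ℝ → ℂ) (hq : Integrable q)
    (lam : ℂ) (him : 0 ≤ lam.im)
    (f : ℝ → ℂ) (C : ℝ) (hC : ∀ x, ‖f x‖ ≤ C)
    (n : ℕ) (x : ℝ) :
    ‖(Phi q lam)^[n] f x‖ ≤ ((∫ t, ‖q t‖) / ‖lam‖) ^ n / n.factorial * C := by
  have hC0 : 0 ≤ C := (norm_nonneg _).trans (hC 0)
  refine (norm_iterate_Phi_le hq him hC n x).trans ?_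
  gcongr
  · exact div_nonneg (tailIntegral_nonneg (fun t => norm_nonneg (q t)) x) (norm_nonneg _)
  · exact tailIntegral_le_integral hq.norm (fun t => norm_nonneg (q t)) x

theorem iterate_Phi_bound (q : ℝ → ℂ) (hq : Integrable q)
    (lam : ℂ) (him : 0 ≤ lam.im) (hne : lam ≠ 0)
    (f : ℝ → ℂ) (hf : Measurable f) (C : ℝ) (hC : ∀ x, ‖f x‖ ≤ C)
    (n : ℕ) (x : ℝ) :
    ‖(Phi q lam)^[n] f x‖ ≤ ((∫ t, ‖q t‖) / ‖lam‖) ^ n / n.factorial * C :=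
  iterate_Phi_bound_general q hq lam him f C hC n x
end

section
/- Let q ∈ L¹(ℝ) be complex-valued, let λ be a nonzero real number, and let m : ℝ → ℂ be a bounded measurable solution of the Jost integral equation for q and λ. Define a(λ) := 1 − (2iλ)^{-1} ∫_ℝ q(t) m(t) dt and b(λ) := (2iλ)^{-1} ∫_ℝ e^{2iλt} q(t) m(t) dt. Then the function e(x) := e^{iλx} m(x) satisfies e(x) − a(λ) e^{iλx} − b(λ) e^{-iλx} → 0 as x → −∞. -/
/-!
With `f = q m`, integrable because `m` is bounded, the kernel splits as
`D(t - x) = (2iλ)⁻¹ (e^{-2iλx} e^{2iλt} - 1)`, so the Jost equation reads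
`m(x) = 1 + (2iλ)⁻¹ (e^{-2iλx} ∫_{t>x} e^{2iλt} f - ∫_{t>x} f)`.
Completing both integrals to all of `ℝ` turns `e^{iλx} m(x) - a e^{iλx} - b e^{-iλx}` into
`(2iλ)⁻¹ (e^{iλx} ∫_{t≤x} f - e^{-iλx} ∫_{t≤x} e^{2iλt} f)`: the left tails of integrable
functions vanish at `-∞`, and the exponentials are unimodular.
-/

open MeasureTheory Filter

open Complex Set Topology

theorem tendsto_setIntegral_Iic_atBot {E : Type*} [NormedAddCommGroup E] [NormedSpace ℝ E]
    {f : ℝ → E} (hf : Integrable f) :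
    Tendsto (fun x : ℝ => ∫ t in Iic x, f t) atBot (𝓝 0) := by
  -- `atTop` on `ℝᵒᵈ` is `atBot` on `ℝ`, along which the sets `Iic x` decrease.
  have h := tendsto_setIntegral_of_antitone (ι := ℝᵒᵈ) (s := fun x => Iic (OrderDual.ofDual x))
    (fun _ => measurableSet_Iic) (fun _ _ hxy => Iic_subset_Iic.mpr hxy) ⟨0, hf.integrableOn⟩
  have hempty : ⋂ x : ℝᵒᵈ, Iic (OrderDual.ofDual x) = ∅ :=
    iInter_Iic_eq_empty_iff.mpr <|
      not_bddBelow_iff.mpr fun x => ⟨x - 1, ⟨.toDual (x - 1), rfl⟩, by linarith⟩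
  rwa [hempty, Measure.restrict_empty, integral_zero_measure] at h

theorem norm_cexp_mul_ofReal {w : ℂ} (hw : w.re = 0) (x : ℝ) : ‖cexp (w * x)‖ = 1 := by
  simp [norm_exp, hw]

theorem MeasureTheory.Integrable.cexp_mul_ofReal_mul {f : ℝ → ℂ} (hf : Integrable f) {w : ℂ}
    (hw : w.re = 0) :
    Integrable fun t : ℝ => cexp (w * t) * f t :=
  hf.bdd_mul (by fun_prop) (.of_forall fun t => (norm_cexp_mul_ofReal hw t).le)

theorem tendsto_cexp_mul_setIntegral_Iic_atBot {f : ℝ → ℂ} (hf : Integrable f) {w : ℂ}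
    (hw : w.re = 0) :
    Tendsto (fun x : ℝ => cexp (w * x) * ∫ t in Iic x, f t) atBot (𝓝 0) :=
  isBoundedUnder_le_mul_tendsto_zero
    ⟨1, eventually_map.mpr (.of_forall fun x => (norm_cexp_mul_ofReal hw x).le)⟩
    (tendsto_setIntegral_Iic_atBot hf)

theorem setIntegral_Ioi_D_mul (lam : ℝ) {f : ℝ → ℂ} (hf : Integrable f) (x : ℝ) :
    ∫ t in Ioi x, D lam (t - x) * f t
      = (2 * I * lam)⁻¹ * (cexp (-(2 * I * lam * x)) * (∫ t in Ioi x, cexp (2 * I * lam * t) * f t)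
          - ∫ t in Ioi x, f t) := by
  have hw : (2 * I * lam).re = 0 := by simp
  have hpt : EqOn (fun t => D lam (t - x) * f t) (fun t => (2 * I * lam)⁻¹ *
      (cexp (-(2 * I * lam * x)) * (cexp (2 * I * lam * t) * f t) - f t)) (Ioi x) := by
    intro t ht
    have hexp : cexp (2 * I * lam * ((t - x : ℝ) : ℂ))
        = cexp (-(2 * I * lam * x)) * cexp (2 * I * lam * t) := by
      rw [← Complex.exp_add]; push_cast; ring_nf
    have hpos : 0 < t - x := sub_pos.mpr ht
    simp only [D, if_pos hpos, hexp, div_eq_inv_mul]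
    ring
  rw [setIntegral_congr_fun measurableSet_Ioi hpt, integral_const_mul,
    integral_sub (((hf.cexp_mul_ofReal_mul hw).const_mul _).integrableOn) hf.integrableOn,
    integral_const_mul]

theorem jost_sub_asymptote_eq (q m : ℝ → ℂ) (lam : ℝ) (hqm : Integrable fun t => q t * m t)
    (heq : ∀ x, m x = 1 + ∫ t in Ioi x, D (lam : ℂ) (t - x) * q t * m t) (x : ℝ) :
    cexp (I * lam * x) * m x
        - (1 - (2 * I * lam)⁻¹ * ∫ t : ℝ, q t * m t) * cexp (I * lam * x)
        - ((2 * I * lam)⁻¹ * ∫ t : ℝ, cexp (2 * I * lam * t) * q t * m t) * cexp (-(I * lam * x))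
      = (2 * I * lam)⁻¹ * (cexp (I * lam * x) * (∫ t in Iic x, q t * m t)
          - cexp (-(I * lam) * x) * ∫ t in Iic x, cexp (2 * I * lam * t) * (q t * m t)) := by
  have hw : (2 * I * lam).re = 0 := by simp
  have hgm := hqm.cexp_mul_ofReal_mul hw
  have hexp : cexp (-(I * lam * x)) = cexp (I * lam * x) * cexp (-(2 * I * lam * x)) := by
    rw [← Complex.exp_add]; ring_nf
  have hD : ∫ t in Ioi x, D lam (t - x) * q t * m t
      = (2 * I * lam)⁻¹ * (cexp (-(2 * I * lam * x)) *
          (∫ t in Ioi x, cexp (2 * I * lam * t) * (q t * m t)) - ∫ t in Ioi x, q t * m t) := by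
    rw [← setIntegral_Ioi_D_mul lam hqm x]
    simp_rw [mul_assoc]
  have hg : ∫ t : ℝ, cexp (2 * I * lam * t) * q t * m t
      = ∫ t : ℝ, cexp (2 * I * lam * t) * (q t * m t) := by
    simp_rw [mul_assoc]
  rw [heq x, hD, hg, ← intervalIntegral.integral_Iic_add_Ioi hqm.integrableOn hqm.integrableOn,
    ← intervalIntegral.integral_Iic_add_Ioi hgm.integrableOn hgm.integrableOn, neg_mul, hexp]
  ring

theorem jost_asymptotics_at_minus_infinity_general (q : ℝ → ℂ) (hq : Integrable q)
    (lam : ℝ)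
    (m : ℝ → ℂ) (hmeas : Measurable m) (hbd : ∃ C, ∀ x, ‖m x‖ ≤ C)
    (heq : ∀ x, m x = 1 + ∫ t in Set.Ioi x, D (lam : ℂ) (t - x) * q t * m t) :
    Tendsto (fun x : ℝ =>
        Complex.exp (Complex.I * lam * x) * m x
          - (1 - (2 * Complex.I * lam)⁻¹ * ∫ t : ℝ, q t * m t)
              * Complex.exp (Complex.I * lam * x)
          - ((2 * Complex.I * lam)⁻¹ * ∫ t : ℝ, Complex.exp (2 * Complex.I * lam * t) * q t * m t)
              * Complex.exp (-(Complex.I * lam * x)))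
      atBot (nhds 0) := by
  obtain ⟨C, hC⟩ := hbd
  have hqm : Integrable fun t => q t * m t :=
    hq.mul_bdd hmeas.aestronglyMeasurable (.of_forall hC)
  have hlim := ((tendsto_cexp_mul_setIntegral_Iic_atBot hqm (w := I * lam) (by simp)).sub
    (tendsto_cexp_mul_setIntegral_Iic_atBot (hqm.cexp_mul_ofReal_mul (w := 2 * I * lam) (by simp))
      (w := -(I * lam)) (by simp))).const_mul (2 * I * lam)⁻¹
  rw [sub_zero, mul_zero] at hlim
  exact hlim.congr fun x => (jost_sub_asymptote_eq q m lam hqm heq x).symm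

theorem jost_asymptotics_at_minus_infinity (q : ℝ → ℂ) (hq : Integrable q)
    (lam : ℝ) (hne : lam ≠ 0)
    (m : ℝ → ℂ) (hmeas : Measurable m) (hbd : ∃ C, ∀ x, ‖m x‖ ≤ C)
    (heq : ∀ x, m x = 1 + ∫ t in Set.Ioi x, D (lam : ℂ) (t - x) * q t * m t) :
    Tendsto (fun x : ℝ =>
        Complex.exp (Complex.I * lam * x) * m x
          - (1 - (2 * Complex.I * lam)⁻¹ * ∫ t : ℝ, q t * m t)
              * Complex.exp (Complex.I * lam * x)
          - ((2 * Complex.I * lam)⁻¹ * ∫ t : ℝ, Complex.exp (2 * Complex.I * lam * t) * q t * m t)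
              * Complex.exp (-(Complex.I * lam * x)))
      atBot (nhds 0) :=
  jost_asymptotics_at_minus_infinity_general q hq lam m hmeas hbd heq
end

section
/- Let λ ∈ ℂ with Im λ ≥ 0 and λ ≠ 0, and let q ∈ L¹(ℝ) vanish almost everywhere outside the interval [−1/|λ|, 1/|λ|]. Define the map Φ on bounded measurable functions f : ℝ → ℂ by (Φf)(x) = ∫_x^∞ D(t−x,λ) q(t) f(t) dt. Then for every bounded measurable f and every n ≥ 1, sup_{x∈ℝ} |(Φⁿ f)(x)| ≤ (3‖q‖_{L¹}/(n|λ|))ⁿ · (1/n!) · sup_{x∈ℝ} |f(x)|. -/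
/-!
Since `Im λ ≥ 0`, the kernel satisfies `‖D(y,λ)‖ ≤ min y (1/|λ|)`. For a Volterra operator
`F ↦ ∫_x^∞ k(x,t) F(t) dt` with `‖k(x,t)‖ ≤ A g(t)`, the `n`-th iterate is bounded by
`Aⁿ G(x)ⁿ / n!` with `G(x) = ∫_x^∞ g`, because `∫_x^∞ g Gᵏ = G(x)^(k+1) / (k+1)` (Fubini on the
triangle `x < t < s`). The crude bound `‖D‖ ≤ 1/|λ|` would only give `(‖q‖₁/|λ|)ⁿ / n!`. To
gain the factor `(3/n)ⁿ`, conjugate by the weight `exp (c ρ)`, where `ρ = clampGap (1/|λ|)`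
takes values in `[0, 3/|λ|]` and drops by at least `min (t - x) (1/|λ|)` from `x` to any
`t ≥ x` in the support of `q`. Since `u ≤ exp (c u) / (c e)`, the weighted kernel is bounded by
`A = 1/(c e)`, while the weight costs at most `exp (3c/|λ|) = eⁿ` for `c = n|λ|/3`.
-/

open MeasureTheory Set

theorem Complex.norm_exp_sub_one_le_norm_of_re_nonpos {z : ℂ} (hz : z.re ≤ 0) :
    ‖exp z - 1‖ ≤ ‖z‖ := by
  have h := (convex_halfSpace_re_le (r := 0)).norm_image_sub_le_of_norm_deriv_le
    (f := exp) (C := 1) (fun w _ => differentiableAt_exp)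
    (fun w hw => by rw [deriv_exp, norm_exp]; exact Real.exp_le_one_iff.mpr hw)
    (by simp : (0 : ℂ) ∈ {c : ℂ | c.re ≤ 0}) hz
  simpa using h

def clampGap (a y : ℝ) : ℝ := max 0 (min (3 * a) (a - y))

lemma clampGap_nonneg (a y : ℝ) : 0 ≤ clampGap a y := le_max_left _ _

lemma clampGap_le {a : ℝ} (ha : 0 ≤ a) (y : ℝ) : clampGap a y ≤ 3 * a :=
  max_le (by linarith) (min_le_left _ _)

lemma min_sub_le_clampGap_sub {a t : ℝ} (x : ℝ) (ht : t ∈ Icc (-a) a) :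
    min (t - x) a ≤ clampGap a x - clampGap a t := by
  obtain ⟨ht₁, ht₂⟩ := ht
  have hρt : clampGap a t = a - t := by
    rw [clampGap, min_eq_right (by linarith), max_eq_right (by linarith)]
  rw [hρt, clampGap]
  rcases le_total (3 * a) (a - x) with h | h
  · rw [min_eq_left h]; have := min_le_right (t - x) a; have := le_max_right 0 (3 * a); linarith
  · rw [min_eq_right h]; have := min_le_left (t - x) a; have := le_max_right 0 (a - x); linarith

section Kernel

variable {lam : ℂ}

lemma re_two_I_mul_nonpos (him : 0 ≤ lam.im) {y : ℝ} (hy : 0 ≤ y) :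
    (2 * Complex.I * lam * y).re ≤ 0 := by
  have : (2 * Complex.I * lam * y).re = -(2 * lam.im * y) := by
    simp [Complex.mul_re, Complex.mul_im]
  rw [this]; have := mul_nonneg him hy; linarith

lemma norm_D_le_inv_norm (him : 0 ≤ lam.im) (y : ℝ) : ‖D lam y‖ ≤ ‖lam‖⁻¹ := by
  unfold D
  split_ifs with hy
  · have h1 : ‖Complex.exp (2 * Complex.I * lam * y)‖ ≤ 1 := by
      rw [Complex.norm_exp]; exact Real.exp_le_one_iff.mpr (re_two_I_mul_nonpos him hy.le)
    have h2 : ‖Complex.exp (2 * Complex.I * lam * y) - 1‖ ≤ 2 :=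
      (norm_sub_le _ _).trans (by rw [norm_one]; linarith)
    calc _ ≤ 2 / ‖2 * Complex.I * lam‖ := by rw [norm_div]; gcongr
      _ = ‖lam‖⁻¹ := by simp [div_mul_eq_div_div]
  · simp

lemma norm_D_le_self (him : 0 ≤ lam.im) {y : ℝ} (hy : 0 ≤ y) : ‖D lam y‖ ≤ y := by
  unfold D
  split_ifs with hy'
  · rcases eq_or_ne lam 0 with rfl | hlam
    · simp [hy]
    calc _ ≤ ‖2 * Complex.I * lam * y‖ / ‖2 * Complex.I * lam‖ := by
          rw [norm_div]
          gcongr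
          exact Complex.norm_exp_sub_one_le_norm_of_re_nonpos (re_two_I_mul_nonpos him hy)
      _ = y := by
          rw [norm_mul _ (y : ℂ), Complex.norm_real, Real.norm_of_nonneg hy]
          field_simp
  · exact norm_zero.le.trans hy

lemma norm_D_mul_exp_clampGap_le (him : 0 ≤ lam.im) {c : ℝ} (hc : 0 < c) {x t : ℝ}
    (hxt : x ≤ t) (ht : t ∈ Icc (-‖lam‖⁻¹) ‖lam‖⁻¹) :
    ‖D lam (t - x)‖ * Real.exp (c * clampGap ‖lam‖⁻¹ t) ≤
      (c * Real.exp 1)⁻¹ * Real.exp (c * clampGap ‖lam‖⁻¹ x) := by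
  set u := min (t - x) ‖lam‖⁻¹
  have hD : ‖D lam (t - x)‖ ≤ u :=
    le_min (norm_D_le_self him (sub_nonneg.mpr hxt)) (norm_D_le_inv_norm him _)
  have hu : u ≤ (c * Real.exp 1)⁻¹ * Real.exp (c * u) := by
    rw [le_inv_mul_iff₀ (by positivity)]
    linarith [Real.exp_one_mul_le_exp (x := c * u)]
  have hgap : c * u + c * clampGap ‖lam‖⁻¹ t ≤ c * clampGap ‖lam‖⁻¹ x := by
    have := mul_le_mul_of_nonneg_left (min_sub_le_clampGap_sub x ht) hc.le
    linarith
  calc _ ≤ (c * Real.exp 1)⁻¹ * Real.exp (c * u) * Real.exp (c * clampGap ‖lam‖⁻¹ t) := by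
        gcongr; exact hD.trans hu
    _ ≤ _ := by
        rw [mul_assoc, ← Real.exp_add]
        gcongr

lemma ae_norm_D_mul_mul_exp_clampGap_le (him : 0 ≤ lam.im) {c : ℝ} (hc : 0 < c)
    {q : ℝ → ℂ} (hsupp : ∀ᵐ t, t ∉ Icc (-‖lam‖⁻¹) ‖lam‖⁻¹ → q t = 0) :
    ∀ᵐ t, ∀ x < t, ‖D lam (t - x) * q t‖ * Real.exp (c * clampGap ‖lam‖⁻¹ t) ≤
      (c * Real.exp 1)⁻¹ * Real.exp (c * clampGap ‖lam‖⁻¹ x) * ‖q t‖ := by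
  filter_upwards [hsupp] with t ht x hxt
  by_cases htI : t ∈ Icc (-‖lam‖⁻¹) ‖lam‖⁻¹
  · rw [norm_mul, mul_right_comm]
    exact mul_le_mul_of_nonneg_right (norm_D_mul_exp_clampGap_le him hc hxt.le htI) (norm_nonneg _)
  · simp [ht htI]

end Kernel

section IntegralIoi

theorem integral_Ioi_mul_integral_Ioi_eq {g h : ℝ → ℝ} (hg : Integrable g) (hh : Integrable h)
    (x : ℝ) :
    ∫ t in Ioi x, h t * ∫ s in Ioi t, g s = ∫ s in Ioi x, g s * ∫ t in Ioo x s, h t := by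
  set F : ℝ × ℝ → ℝ := {p | p.1 < p.2}.indicator fun p => h p.1 * g p.2
  have hF : Integrable F ((volume.restrict (Ioi x)).prod (volume.restrict (Ioi x))) :=
    (hh.restrict.mul_prod hg.restrict).indicator (measurableSet_lt measurable_fst measurable_snd)
  have hleft : ∀ t ∈ Ioi x, ∫ s in Ioi x, F (t, s) = h t * ∫ s in Ioi t, g s := by
    intro t ht
    have : (fun s => F (t, s)) = (Ioi t).indicator fun s => h t * g s := by
      ext s; simp [F, indicator]
    rw [this, setIntegral_indicator measurableSet_Ioi,
      inter_eq_right.mpr (Ioi_subset_Ioi (le_of_lt ht)), integral_const_mul]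
  have hright : ∀ s, ∫ t in Ioi x, F (t, s) = g s * ∫ t in Ioo x s, h t := by
    intro s
    have : (fun t => F (t, s)) = (Iio s).indicator fun t => g s * h t := by
      ext t; simp [F, indicator, mul_comm]
    rw [this, setIntegral_indicator measurableSet_Iio, Ioi_inter_Iio, integral_const_mul]
  rw [← setIntegral_congr_fun measurableSet_Ioi hleft,
    integral_integral_swap (f := fun t s => F (t, s)) hF]
  exact integral_congr_ae (ae_of_all _ hright)

variable {g : ℝ → ℝ}

lemma integral_Ioi_nonneg (hg0 : 0 ≤ g) (y : ℝ) : 0 ≤ ∫ t in Ioi y, g t :=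
  setIntegral_nonneg measurableSet_Ioi fun t _ => hg0 t

lemma antitone_integral_Ioi (hg : Integrable g) (hg0 : 0 ≤ g) :
    Antitone fun y => ∫ t in Ioi y, g t := fun _ _ huv =>
  setIntegral_mono_set hg.integrableOn (ae_of_all _ hg0) (Ioi_subset_Ioi huv).eventuallyLE

lemma integrable_mul_pow_integral_Ioi (hg : Integrable g) (hg0 : 0 ≤ g) (k : ℕ) :
    Integrable fun t => g t * (∫ s in Ioi t, g s) ^ k :=
  hg.mul_bdd ((antitone_integral_Ioi hg hg0).measurable.pow_const k).aestronglyMeasurable <|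
    ae_of_all _ fun y => by
      rw [norm_pow, Real.norm_of_nonneg (integral_Ioi_nonneg hg0 y)]
      exact pow_le_pow_left₀ (integral_Ioi_nonneg hg0 y)
        (setIntegral_le_integral hg (ae_of_all _ hg0)) k

theorem integral_Ioi_mul_pow_integral_Ioi (hg : Integrable g) (hg0 : 0 ≤ g)
    (k : ℕ) (x : ℝ) :
    ∫ t in Ioi x, g t * (∫ s in Ioi t, g s) ^ k = (∫ t in Ioi x, g t) ^ (k + 1) / (k + 1) := by
  set G : ℝ → ℝ := fun y => ∫ t in Ioi y, g t
  have hInt := integrable_mul_pow_integral_Ioi hg hg0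
  induction k generalizing x with
  | zero => simp
  | succ k ih =>
    set I : ℝ := ∫ t in Ioi x, g t * G t ^ (k + 1)
    have hinner : ∀ s ∈ Ioi x, ∫ t in Ioo x s, g t * G t ^ k
        = (G x ^ (k + 1) - G s ^ (k + 1)) / (k + 1) := fun s hs => by
      rw [← integral_Ioc_eq_integral_Ioo, ← intervalIntegral.integral_of_le (le_of_lt hs),
        ← intervalIntegral.integral_Ioi_sub_Ioi (hInt k).integrableOn (le_of_lt hs), ih, ih,
        sub_div]
    have hI : I = (G x * G x ^ (k + 1) - I) / (k + 1) := calc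
      I = ∫ t in Ioi x, (g t * G t ^ k) * G t := by simp only [I, pow_succ, mul_assoc]
      _ = ∫ s in Ioi x, g s * ((G x ^ (k + 1) - G s ^ (k + 1)) / (k + 1)) := by
        rw [integral_Ioi_mul_integral_Ioi_eq hg (hInt k)]
        exact setIntegral_congr_fun measurableSet_Ioi fun s hs => by rw [hinner s hs]
      _ = ∫ s in Ioi x, (g s * G x ^ (k + 1) - g s * G s ^ (k + 1)) / (k + 1) := by
        congr 1; ext s; ring
      _ = (G x * G x ^ (k + 1) - I) / (k + 1) := by
        rw [integral_div, integral_sub (hg.mul_const _).integrableOn (hInt _).integrableOn,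
          integral_mul_const]
    have hk : (k : ℝ) + 1 ≠ 0 := by positivity
    push_cast
    field_simp at hI ⊢
    linear_combination hI

end IntegralIoi

noncomputable def volterraOp (k : ℝ → ℝ → ℂ) (F : ℝ → ℂ) (x : ℝ) : ℂ := ∫ t in Ioi x, k x t * F t

lemma Phi_eq_volterraOp (q : ℝ → ℂ) (lam : ℂ) :
    Phi q lam = volterraOp fun x t => D lam (t - x) * q t := rfl

theorem norm_iterate_volterraOp_le {k : ℝ → ℝ → ℂ} {g W : ℝ → ℝ} {A : ℝ}
    (hg : Integrable g) (hg0 : 0 ≤ g) (hA : 0 ≤ A)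
    (hk : ∀ᵐ t, ∀ x < t, ‖k x t‖ * W t ≤ A * W x * g t) {f : ℝ → ℂ} (hf : ∀ y, ‖f y‖ ≤ W y)
    (n : ℕ) (y : ℝ) :
    ‖(volterraOp k)^[n] f y‖ ≤
      A ^ n * W y * (∫ t in Ioi y, g t) ^ n / n.factorial := by
  set G : ℝ → ℝ := fun y => ∫ t in Ioi y, g t
  have hG0 : ∀ y, 0 ≤ G y := integral_Ioi_nonneg hg0
  induction n generalizing y with
  | zero => simpa using hf y
  | succ n ih =>
    rw [Function.iterate_succ_apply']
    set F := (volterraOp k)^[n] f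
    have hbound : ∀ᵐ t ∂volume.restrict (Ioi y),
        ‖k y t * F t‖ ≤ A ^ (n + 1) * W y / n.factorial * (g t * G t ^ n) := by
      filter_upwards [ae_restrict_of_ae hk, self_mem_ae_restrict measurableSet_Ioi] with t hkt hyt
      calc ‖k y t * F t‖ ≤ ‖k y t‖ * (A ^ n * W t * G t ^ n / n.factorial) := by
            rw [norm_mul]; gcongr; exact ih t
        _ = ‖k y t‖ * W t * (A ^ n * G t ^ n / n.factorial) := by ring
        _ ≤ A * W y * g t * (A ^ n * G t ^ n / n.factorial) := by
            refine mul_le_mul_of_nonneg_right (hkt y hyt) ?_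
            exact div_nonneg (mul_nonneg (pow_nonneg hA n) (pow_nonneg (hG0 t) n)) (by positivity)
        _ = _ := by ring
    calc _ ≤ ∫ t in Ioi y, A ^ (n + 1) * W y / n.factorial * (g t * G t ^ n) :=
          norm_integral_le_of_norm_le
            ((integrable_mul_pow_integral_Ioi hg hg0 n).const_mul _).integrableOn hbound
      _ = A ^ (n + 1) * W y / n.factorial * (G y ^ (n + 1) / (n + 1)) := by
          rw [integral_const_mul, integral_Ioi_mul_pow_integral_Ioi hg hg0]
      _ = _ := by
          rw [Nat.factorial_succ]; push_cast; field_simp; rfl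

theorem iterate_Phi_bound_compact_support_general (lam : ℂ) (him : 0 ≤ lam.im) (hne : lam ≠ 0)
    (q : ℝ → ℂ) (hq : Integrable q)
    (hsupp : ∀ᵐ t ∂(volume : Measure ℝ),
      t ∉ Set.Icc (-(1 / ‖lam‖)) (1 / ‖lam‖) → q t = 0)
    (f : ℝ → ℂ) (C : ℝ) (hC : ∀ x, ‖f x‖ ≤ C)
    (n : ℕ) (hn : 1 ≤ n) (x : ℝ) :
    ‖(Phi q lam)^[n] f x‖ ≤
      (3 * (∫ t, ‖q t‖) / (n * ‖lam‖)) ^ n / n.factorial * C := by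
  set a := ‖lam‖⁻¹
  set c : ℝ := n * ‖lam‖ / 3
  have hn' : (0 : ℝ) < n := by exact_mod_cast hn
  have hc : 0 < c := by positivity
  have hC0 : 0 ≤ C := (norm_nonneg _).trans (hC 0)
  set W : ℝ → ℝ := fun y => C * Real.exp (c * clampGap a y)
  have hk : ∀ᵐ t, ∀ y < t, ‖D lam (t - y) * q t‖ * W t ≤ (c * Real.exp 1)⁻¹ * W y * ‖q t‖ :=
    (ae_norm_D_mul_mul_exp_clampGap_le him hc (by simpa only [one_div] using hsupp)).mono
      fun t ht y hyt => by linear_combination C * ht y hyt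
  have hf : ∀ y, ‖f y‖ ≤ W y := fun y => (hC y).trans <|
    le_mul_of_one_le_right hC0 (Real.one_le_exp (mul_nonneg hc.le (clampGap_nonneg _ _)))
  have hWx : W x ≤ C * Real.exp 1 ^ n := by
    have hexp : c * clampGap a x ≤ n := calc
      c * clampGap a x ≤ c * (3 * a) := by gcongr; exact clampGap_le (by positivity) x
      _ = n := by simp only [c, a]; field_simp
    simpa only [W, Real.exp_one_pow] using
      mul_le_mul_of_nonneg_left (Real.exp_le_exp.mpr hexp) hC0
  have hGx : ∫ t in Ioi x, ‖q t‖ ≤ ∫ t, ‖q t‖ :=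
    setIntegral_le_integral hq.norm (ae_of_all _ fun _ => norm_nonneg _)
  rw [Phi_eq_volterraOp]
  calc ‖(volterraOp _)^[n] f x‖
      ≤ (c * Real.exp 1)⁻¹ ^ n * W x * (∫ t in Ioi x, ‖q t‖) ^ n / n.factorial :=
        norm_iterate_volterraOp_le hq.norm (fun _ => norm_nonneg _) (by positivity) hk hf n x
    _ ≤ (c * Real.exp 1)⁻¹ ^ n * (C * Real.exp 1 ^ n) * (∫ t, ‖q t‖) ^ n / n.factorial := by
        gcongr
    _ = _ := by
        simp only [c]
        rw [inv_pow, mul_pow, div_pow, div_pow, mul_pow, mul_pow]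
        field_simp

theorem iterate_Phi_bound_compact_support (lam : ℂ) (him : 0 ≤ lam.im) (hne : lam ≠ 0)
    (q : ℝ → ℂ) (hq : Integrable q)
    (hsupp : ∀ᵐ t ∂(volume : Measure ℝ),
      t ∉ Set.Icc (-(1 / ‖lam‖)) (1 / ‖lam‖) → q t = 0)
    (f : ℝ → ℂ) (hf : Measurable f) (C : ℝ) (hC : ∀ x, ‖f x‖ ≤ C)
    (n : ℕ) (hn : 1 ≤ n) (x : ℝ) :
    ‖(Phi q lam)^[n] f x‖ ≤
      (3 * (∫ t, ‖q t‖) / (n * ‖lam‖)) ^ n / n.factorial * C :=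
  iterate_Phi_bound_compact_support_general lam him hne q hq hsupp f C hC n hn x
end

section
/- For every real c ≥ 0, one has 1 + ∑_{n=1}^∞ (3c)ⁿ/(nⁿ · n!) ≤ exp(3√c). -/
/-!
Since `(2m)! ≤ (2m)^m m!`, the `m`-th term is at most `(6c)^m / (2m)! ≤ (3√c)^(2m) / (2m)!`,
the `m`-th term of the power series of `cosh (3√c)`; and `cosh x ≤ exp x` for `x ≥ 0`.
-/

open Nat Real

lemma Real.cosh_le_exp_of_nonneg {x : ℝ} (hx : 0 ≤ x) : cosh x ≤ exp x := by
  have : exp (-x) ≤ exp x := exp_le_exp.2 (by linarith)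
  rw [cosh_eq]
  linarith

lemma pow_div_pow_self_mul_factorial_le {y : ℝ} (hy : 0 ≤ y) (m : ℕ) :
    y ^ m / ((m : ℝ) ^ m * m !) ≤ (2 * y) ^ m / (2 * m)! := by
  have hfac : ((2 * m)! : ℝ) ≤ 2 ^ m * ((m : ℝ) ^ m * m !) := by
    calc ((2 * m)! : ℝ) ≤ ((2 * m) ^ m * m ! : ℕ) := mod_cast factorial_two_mul_le m
      _ = 2 ^ m * ((m : ℝ) ^ m * m !) := by push_cast [mul_pow]; ring
  have hpos : 0 < (m : ℝ) ^ m * m ! :=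
    pos_of_mul_pos_right ((cast_pos.2 (factorial_pos _)).trans_le hfac) (by positivity)
  rw [div_le_div_iff₀ hpos (by positivity)]
  calc y ^ m * (2 * m)! ≤ y ^ m * (2 ^ m * ((m : ℝ) ^ m * m !)) := by gcongr
    _ = (2 * y) ^ m * ((m : ℝ) ^ m * m !) := by ring

lemma pow_div_pow_self_mul_factorial_le_sqrt {c : ℝ} (hc : 0 ≤ c) (m : ℕ) :
    (3 * c) ^ m / ((m : ℝ) ^ m * m !) ≤ (3 * √c) ^ (2 * m) / (2 * m)! := by
  have hsq : (3 * √c) ^ (2 * m) = (9 * c) ^ m := by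
    rw [pow_mul, mul_pow, sq_sqrt hc]; norm_num
  calc (3 * c) ^ m / ((m : ℝ) ^ m * m !) ≤ (2 * (3 * c)) ^ m / (2 * m)! :=
        pow_div_pow_self_mul_factorial_le (by positivity) m
    _ ≤ (3 * √c) ^ (2 * m) / (2 * m)! := by
        rw [hsq]
        gcongr ?_ ^ m / _
        linarith

theorem series_bound_exp_sqrt (c : ℝ) (hc : 0 ≤ c) :
    1 + ∑' n : ℕ, (3 * c) ^ (n + 1) /
        ((n + 1 : ℝ) ^ (n + 1) * (Nat.factorial (n + 1) : ℝ))
      ≤ Real.exp (3 * Real.sqrt c) := by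
  set x := 3 * √c
  have hcosh := (hasSum_cosh x).summable
  have hterm (n : ℕ) : (3 * c) ^ (n + 1) / ((n + 1 : ℝ) ^ (n + 1) * (n + 1)!) ≤
      x ^ (2 * (n + 1)) / (2 * (n + 1))! := by
    exact_mod_cast pow_div_pow_self_mul_factorial_le_sqrt hc (n + 1)
  have htail := (summable_nat_add_iff 1).2 hcosh
  calc 1 + ∑' n : ℕ, (3 * c) ^ (n + 1) / ((n + 1 : ℝ) ^ (n + 1) * (n + 1)!)
      ≤ 1 + ∑' n : ℕ, x ^ (2 * (n + 1)) / (2 * (n + 1))! :=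
        add_le_add_right (Summable.tsum_le_tsum hterm
          (htail.of_nonneg_of_le (fun n => by positivity) hterm) htail) 1
    _ = cosh x := by rw [cosh_eq_tsum, hcosh.tsum_eq_zero_add]; simp
    _ ≤ exp x := cosh_le_exp_of_nonneg (by positivity)
end

section
/- Let z ∈ ℂ with Im z > 0 and let ζ₁, ζ₂ ∈ ℂ with Im ζ₁ ≥ 0 and Im ζ₂ ≥ 0. Then |(z − ζ₁)/(z − conj(ζ₁)) − (z − ζ₂)/(z − conj(ζ₂))| ≤ 2|ζ₁ − ζ₂|/Im z. -/
/-! Writing `b ζ z = (z - ζ) / (z - conj ζ)`, one has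
`b ζ₁ z - b ζ₂ z = ((ζ₂ - ζ₁) + b ζ₂ z * conj (ζ₁ - ζ₂)) / (z - conj ζ₁)`.
For `ζ` in the closed upper half-plane, `z` is at least as close to `ζ` as to `conj ζ`, so
`‖b ζ₂ z‖ ≤ 1`, and `‖z - conj ζ₁‖ ≥ Im z + Im ζ₁ ≥ Im z`. -/

open ComplexConjugate

namespace Complex

noncomputable def blaschkeFactor (ζ z : ℂ) : ℂ := (z - ζ) / (z - conj ζ)

theorem im_le_norm_sub_conj {z ζ : ℂ} (hζ : 0 ≤ ζ.im) : z.im ≤ ‖z - conj ζ‖ :=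
  calc z.im ≤ (z - conj ζ).im := by simp only [sub_im, conj_im]; linarith
    _ ≤ ‖z - conj ζ‖ := im_le_norm _

theorem norm_sub_le_norm_sub_conj {z ζ : ℂ} (hz : 0 ≤ z.im) (hζ : 0 ≤ ζ.im) :
    ‖z - ζ‖ ≤ ‖z - conj ζ‖ := by
  have hsq : normSq (z - ζ) ≤ normSq (z - conj ζ) := by
    simp only [normSq_apply, sub_re, sub_im, conj_re, conj_im]
    nlinarith [mul_nonneg hz hζ]
  rw [norm_def, norm_def]
  exact Real.sqrt_le_sqrt hsq

theorem norm_blaschkeFactor_le_one {z ζ : ℂ} (hz : 0 ≤ z.im) (hζ : 0 ≤ ζ.im) :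
    ‖blaschkeFactor ζ z‖ ≤ 1 := by
  rw [blaschkeFactor, norm_div]
  exact div_le_one_of_le₀ (norm_sub_le_norm_sub_conj hz hζ) (norm_nonneg _)

theorem blaschkeFactor_sub_blaschkeFactor {z ζ₁ ζ₂ : ℂ} (h₁ : z - conj ζ₁ ≠ 0)
    (h₂ : z - conj ζ₂ ≠ 0) :
    blaschkeFactor ζ₁ z - blaschkeFactor ζ₂ z =
      (ζ₂ - ζ₁ + blaschkeFactor ζ₂ z * conj (ζ₁ - ζ₂)) / (z - conj ζ₁) := by
  rw [blaschkeFactor, blaschkeFactor, map_sub]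
  field_simp
  ring

theorem norm_blaschkeFactor_sub_le {z ζ₁ ζ₂ : ℂ} (hz : 0 < z.im) (h₁ : 0 ≤ ζ₁.im)
    (h₂ : 0 ≤ ζ₂.im) :
    ‖blaschkeFactor ζ₁ z - blaschkeFactor ζ₂ z‖ ≤ 2 * ‖ζ₁ - ζ₂‖ / z.im := by
  have hd₁ : z.im ≤ ‖z - conj ζ₁‖ := im_le_norm_sub_conj h₁
  have hd₂ : z.im ≤ ‖z - conj ζ₂‖ := im_le_norm_sub_conj h₂
  have hb : ‖blaschkeFactor ζ₂ z‖ ≤ 1 := norm_blaschkeFactor_le_one hz.le h₂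
  have hnum : ‖ζ₂ - ζ₁ + blaschkeFactor ζ₂ z * conj (ζ₁ - ζ₂)‖ ≤ 2 * ‖ζ₁ - ζ₂‖ :=
    calc _ ≤ ‖ζ₂ - ζ₁‖ + ‖blaschkeFactor ζ₂ z‖ * ‖ζ₁ - ζ₂‖ := by
          rw [← norm_conj (ζ₁ - ζ₂), ← norm_mul]; exact norm_add_le _ _
      _ ≤ ‖ζ₁ - ζ₂‖ + 1 * ‖ζ₁ - ζ₂‖ := by rw [norm_sub_rev]; gcongr
      _ = 2 * ‖ζ₁ - ζ₂‖ := by ring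
  rw [blaschkeFactor_sub_blaschkeFactor (norm_pos_iff.mp (hz.trans_le hd₁))
    (norm_pos_iff.mp (hz.trans_le hd₂)), norm_div]
  gcongr

end Complex

theorem blaschke_factor_lipschitz (z ζ₁ ζ₂ : ℂ) (hz : 0 < z.im)
    (h1 : 0 ≤ ζ₁.im) (h2 : 0 ≤ ζ₂.im) :
    ‖(z - ζ₁) / (z - starRingEnd ℂ ζ₁) - (z - ζ₂) / (z - starRingEnd ℂ ζ₂)‖
      ≤ 2 * ‖ζ₁ - ζ₂‖ / z.im :=
  Complex.norm_blaschkeFactor_sub_le hz h1 h2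
end

section
/- The quantity β := sup over λ ∈ ℂ with Im λ > 0 of ∫_0^π log |(e^{it} − conj(λ))/(e^{it} − λ)| dt is finite (and positive). -/
/-- The set of values of the integral `∫_0^π log |(e^{it} - conj λ)/(e^{it} - λ)| dt`
over all `λ` in the open upper half-plane. -/
noncomputable def blaschkeIntegralValues : Set ℝ :=
  {y : ℝ | ∃ lam : ℂ, 0 < lam.im ∧
    y = ∫ t in (0:ℝ)..Real.pi, Real.log (‖
      ((Complex.exp (Complex.I * t) - starRingEnd ℂ lam) /
        (Complex.exp (Complex.I * t) - lam))‖)}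

/-!
Write `z = e^{it}` and `θ = arg λ`. The identity `|z - λ̄|² = |z - λ|² + 4 Im λ sin t` makes the
integrand positive on `(0, π)`; when `|λ| ≠ 1` it is also continuous, so its integral is a positive
element of the set (take `λ = 2i`).
For the upper bound, `|z - λ|² = (1 - |λ|)² + 4|λ| sin²((t - θ)/2) ≥ 4 Im λ (t - θ)² / π²` by
Jordan's inequality, hence `|z - λ̄| / |z - λ| ≤ 2π / |t - θ|` on `[0, π]`. The integrand is thus
dominated by `log (2π) - log |t - θ|`, and since `θ ∈ [0, π]` and `x log x ≥ x - 1`, the integral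
of `log |t - θ|` over `[0, π]` is at least `-2`, uniformly in `λ`.
-/

open Real Complex ComplexConjugate

lemma Complex.normSq_sub_conj (z w : ℂ) :
    normSq (z - conj w) = normSq (z - w) + 4 * w.im * z.im := by
  simp only [normSq_apply, sub_re, sub_im, conj_re, conj_im]
  ring

lemma Complex.normSq_exp_I_mul_sub (t : ℝ) (w : ℂ) :
    normSq (exp (I * t) - w) = (1 - ‖w‖) ^ 2 + 4 * ‖w‖ * Real.sin ((t - arg w) / 2) ^ 2 := by
  have hcos : Real.cos (t - arg w) = 1 - 2 * Real.sin ((t - arg w) / 2) ^ 2 := by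
    rw [← Real.cos_two_mul_eq_one_sub, mul_div_cancel₀ _ two_ne_zero]
  conv_lhs => rw [← norm_mul_exp_arg_mul_I w, mul_comm I]
  simp only [normSq_apply, sub_re, sub_im, re_ofReal_mul, im_ofReal_mul, exp_ofReal_mul_I_re,
    exp_ofReal_mul_I_im]
  rw [Real.cos_sub] at hcos
  linear_combination (-2 * ‖w‖) * hcos + Real.sin_sq_add_cos_sq t +
    ‖w‖ ^ 2 * Real.sin_sq_add_cos_sq (arg w)

lemma Complex.normSq_exp_I_mul_sub_conj (t : ℝ) (w : ℂ) :
    normSq (exp (I * t) - conj w) = normSq (exp (I * t) - w) + 4 * w.im * Real.sin t := by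
  rw [normSq_sub_conj, mul_comm I, exp_ofReal_mul_I_im]

lemma sq_le_pi_sq_mul_sin_half_sq {x : ℝ} (hx : |x| ≤ π) :
    x ^ 2 ≤ π ^ 2 * Real.sin (x / 2) ^ 2 := by
  have h := mul_abs_le_abs_sin (x := x / 2) (by rw [abs_div, abs_two]; linarith)
  have h2 := pow_le_pow_left₀ (by positivity) h 2
  rw [mul_pow, sq_abs, sq_abs, div_pow, div_pow] at h2
  have := Real.pi_pos
  rw [div_mul_div_comm, div_le_iff₀ (by positivity)] at h2
  nlinarith

lemma Complex.four_mul_norm_mul_sq_le_normSq_exp_I_mul_sub {t : ℝ} {w : ℂ}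
    (h : |t - arg w| ≤ π) :
    4 * ‖w‖ * (t - arg w) ^ 2 ≤ π ^ 2 * normSq (exp (I * t) - w) := by
  rw [normSq_exp_I_mul_sub]
  nlinarith [sq_le_pi_sq_mul_sin_half_sq h, norm_nonneg w, sq_nonneg (π * (1 - ‖w‖))]

lemma Complex.abs_sub_arg_le_pi {t : ℝ} {w : ℂ} (hw : 0 ≤ w.im) (ht : t ∈ Set.Icc 0 π) :
    |t - arg w| ≤ π := by
  have := arg_nonneg_iff.mpr hw
  have := arg_le_pi w
  rw [abs_le]; constructor <;> linarith [ht.1, ht.2]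

lemma Complex.normSq_exp_I_mul_sub_conj_mul_sq_le {t : ℝ} {w : ℂ} (hw : 0 ≤ w.im)
    (ht : |t - arg w| ≤ π) :
    normSq (exp (I * t) - conj w) * (t - arg w) ^ 2 ≤ 2 * π ^ 2 * normSq (exp (I * t) - w) := by
  have hsq : (t - arg w) ^ 2 ≤ π ^ 2 := sq_le_sq' (abs_le.mp ht).1 (abs_le.mp ht).2
  rw [normSq_exp_I_mul_sub_conj]
  nlinarith [four_mul_norm_mul_sq_le_normSq_exp_I_mul_sub ht, im_le_norm w,
    normSq_nonneg (exp (I * t) - w), mul_le_mul_of_nonneg_left (Real.sin_le_one t)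
      (by positivity : 0 ≤ 4 * w.im * (t - arg w) ^ 2)]

noncomputable def blaschkeIntegrand (lam : ℂ) (t : ℝ) : ℝ :=
  Real.log ‖(exp (I * t) - conj lam) / (exp (I * t) - lam)‖

/-- `Real.log` is even, so the right-hand side is `log (2π) - log |t - arg λ|`. -/
lemma blaschkeIntegrand_le {lam : ℂ} (hlam : 0 < lam.im) {t : ℝ} (ht : t ∈ Set.Icc 0 π)
    (hne : t ≠ arg lam) : blaschkeIntegrand lam t ≤ Real.log (2 * π) - Real.log (t - arg lam) := by
  have hdist := abs_sub_arg_le_pi hlam.le ht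
  have hlt : 0 < |t - arg lam| := abs_pos.mpr (sub_ne_zero.mpr hne)
  have hden : 0 < normSq (exp (I * t) - lam) := by
    have := four_mul_norm_mul_sq_le_normSq_exp_I_mul_sub hdist
    have : 0 < ‖lam‖ := hlam.trans_le (im_le_norm lam)
    nlinarith [pow_pos hlt 2, sq_abs (t - arg lam), Real.pi_pos]
  have hnum : normSq (exp (I * t) - lam) ≤ normSq (exp (I * t) - conj lam) := by
    rw [normSq_exp_I_mul_sub_conj]
    nlinarith [Real.sin_nonneg_of_nonneg_of_le_pi ht.1 ht.2]
  have hq : 0 < ‖(exp (I * t) - conj lam) / (exp (I * t) - lam)‖ :=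
    norm_pos_iff.mpr (div_ne_zero (normSq_pos.mp (hden.trans_le hnum)) (normSq_pos.mp hden))
  have hsq :
      (‖(exp (I * t) - conj lam) / (exp (I * t) - lam)‖ * |t - arg lam|) ^ 2 ≤ 2 * π ^ 2 := by
    rw [mul_pow, sq_abs, Complex.sq_norm, map_div₀, div_mul_eq_mul_div, div_le_iff₀ hden]
    exact normSq_exp_I_mul_sub_conj_mul_sq_le hlam.le hdist
  have hle : ‖(exp (I * t) - conj lam) / (exp (I * t) - lam)‖ ≤ 2 * π / |t - arg lam| := by
    rw [le_div_iff₀ hlt]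
    nlinarith [Real.pi_pos, mul_pos hq hlt]
  calc blaschkeIntegrand lam t ≤ Real.log (2 * π / |t - arg lam|) := Real.log_le_log hq hle
    _ = _ := by rw [Real.log_div (by positivity) hlt.ne', Real.log_abs]

lemma neg_two_le_integral_log_sub {a b θ : ℝ} (ha : a ≤ θ) (hb : θ ≤ b) :
    -2 ≤ ∫ t in a..b, Real.log (t - θ) := by
  rw [intervalIntegral.integral_comp_sub_right (fun s => Real.log s), integral_log,
    ← neg_sub θ a, Real.log_neg_eq_log]
  linarith [Real.self_sub_one_le_mul_log (sub_nonneg.mpr ha),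
    Real.self_sub_one_le_mul_log (sub_nonneg.mpr hb)]

lemma Complex.exp_I_mul_sub_ne_zero {w : ℂ} (hw : ‖w‖ ≠ 1) (t : ℝ) : exp (I * t) - w ≠ 0 := by
  rw [sub_ne_zero, mul_comm]
  rintro rfl
  exact hw (norm_exp_ofReal_mul_I t)

open intervalIntegral MeasureTheory in
lemma integral_blaschkeIntegrand_le {lam : ℂ} (hlam : 0 < lam.im) :
    ∫ t in 0..π, blaschkeIntegrand lam t ≤ π * Real.log (2 * π) + 2 := by
  -- the junk value `0` of a non-integrable integral is below the bound as well
  by_cases hf : IntervalIntegrable (blaschkeIntegrand lam) volume 0 π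
  swap
  · have : 0 ≤ Real.log (2 * π) := Real.log_nonneg (by linarith [Real.pi_gt_three])
    rw [integral_undef hf]
    positivity
  have harg : arg lam ∈ Set.Icc 0 π := ⟨arg_nonneg_iff.mpr hlam.le, arg_le_pi lam⟩
  have hlog_sub : IntervalIntegrable (fun t => Real.log (t - arg lam)) volume 0 π := by
    simpa using
      (intervalIntegrable_log' (a := -arg lam) (b := π - arg lam)).comp_sub_right (arg lam)
  calc ∫ t in 0..π, blaschkeIntegrand lam t
      ≤ ∫ t in 0..π, (Real.log (2 * π) - Real.log (t - arg lam)) := by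
        refine integral_mono_ae_restrict Real.pi_pos.le hf
          (intervalIntegrable_const.sub hlog_sub) ?_
        filter_upwards [ae_restrict_mem measurableSet_Icc,
          ae_restrict_of_ae (volume.ae_ne (arg lam))] with t ht hne
        exact blaschkeIntegrand_le hlam ht hne
    _ = π * Real.log (2 * π) - ∫ t in 0..π, Real.log (t - arg lam) := by
        rw [integral_sub intervalIntegrable_const hlog_sub, intervalIntegral.integral_const,
          sub_zero, smul_eq_mul]
    _ ≤ π * Real.log (2 * π) + 2 := by linarith [neg_two_le_integral_log_sub harg.1 harg.2]

lemma integral_blaschkeIntegrand_pos {lam : ℂ} (hlam : 0 < lam.im) (hnorm : ‖lam‖ ≠ 1) :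
    0 < ∫ t in 0..π, blaschkeIntegrand lam t := by
  have hconj : ‖conj lam‖ ≠ 1 := by rwa [RCLike.norm_conj]
  have hcont : Continuous (blaschkeIntegrand lam) := by
    refine Continuous.log ((Continuous.div (by fun_prop) (by fun_prop)
      (exp_I_mul_sub_ne_zero hnorm)).norm) fun t => ?_
    exact norm_ne_zero_iff.mpr
      (div_ne_zero (exp_I_mul_sub_ne_zero hconj t) (exp_I_mul_sub_ne_zero hnorm t))
  refine intervalIntegral.intervalIntegral_pos_of_pos_on (hcont.intervalIntegrable _ _)
    (fun t ht => ?_) Real.pi_pos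
  have hden : 0 < normSq (exp (I * t) - lam) := normSq_pos.mpr (exp_I_mul_sub_ne_zero hnorm t)
  have hlt : normSq (exp (I * t) - lam) < normSq (exp (I * t) - conj lam) := by
    rw [normSq_exp_I_mul_sub_conj]
    nlinarith [Real.sin_pos_of_pos_of_lt_pi ht.1 ht.2]
  refine Real.log_pos ?_
  rw [← one_lt_sq_iff₀ (norm_nonneg _), Complex.sq_norm, map_div₀, one_lt_div hden]
  exact hlt

theorem blaschke_integral_sup_finite_pos :
    BddAbove blaschkeIntegralValues ∧ 0 < sSup blaschkeIntegralValues := by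
  have hbdd : BddAbove blaschkeIntegralValues := by
    refine ⟨π * Real.log (2 * π) + 2, ?_⟩
    rintro _ ⟨lam, hlam, rfl⟩
    exact integral_blaschkeIntegrand_le hlam
  have h2I : 0 < (2 * I).im := by simp
  have h2I_norm : ‖2 * I‖ ≠ 1 := by simp
  exact ⟨hbdd, (integral_blaschkeIntegrand_pos h2I h2I_norm).trans_le
    (le_csSup hbdd ⟨2 * I, h2I, rfl⟩)⟩
end

section
/- Let λ ∈ ℂ with Im λ > 0 and let ξ > 0 satisfy 2|λ| ≤ ξ. Then ξ · ∫_0^π log |(ξe^{it} − conj(λ))/(ξe^{it} − λ)| dt ≤ 4π|λ|. -/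
/-!
If `‖a‖, ‖b‖ ≤ ‖x‖ / 2`, then `log y ≤ y - 1` bounds `log (‖x - a‖ / ‖x - b‖)` by
`‖a - b‖ / ‖x - b‖ ≤ 2 ‖a - b‖ / ‖x‖`, and swapping `a` and `b` bounds it from below. For
`x = ξ e^{it}`, `a = conj λ`, `b = λ` the integrand is therefore bounded in absolute value by
`4 |λ| / ξ`, and integrating over `[0, π]` gives the claim.
-/

open Real

section NormedField

variable {𝕜 : Type*} [NormedField 𝕜] {x a b : 𝕜}

theorem log_norm_div_sub_le (hx : x ≠ 0) (ha : 2 * ‖a‖ ≤ ‖x‖) (hb : 2 * ‖b‖ ≤ ‖x‖) :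
    log ‖(x - a) / (x - b)‖ ≤ 2 * ‖a - b‖ / ‖x‖ := by
  have hx₀ : 0 < ‖x‖ := norm_pos_iff.mpr hx
  have hxa : 0 < ‖x - a‖ := by linarith [norm_sub_norm_le x a]
  have hxb : ‖x‖ / 2 ≤ ‖x - b‖ := by linarith [norm_sub_norm_le x b]
  have hdiff : ‖x - a‖ - ‖x - b‖ ≤ ‖a - b‖ := by
    simpa [sub_sub_sub_cancel_left, norm_sub_rev b a] using norm_sub_norm_le (x - a) (x - b)
  rw [norm_div]
  have hxb₀ : 0 < ‖x - b‖ := by linarith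
  calc log (‖x - a‖ / ‖x - b‖) ≤ ‖x - a‖ / ‖x - b‖ - 1 := log_le_sub_one_of_pos (by positivity)
    _ = (‖x - a‖ - ‖x - b‖) / ‖x - b‖ := div_sub_one hxb₀.ne'
    _ ≤ ‖a - b‖ / (‖x‖ / 2) := div_le_div₀ (norm_nonneg _) hdiff (by positivity) hxb
    _ = 2 * ‖a - b‖ / ‖x‖ := by field_simp

theorem abs_log_norm_div_sub_le (hx : x ≠ 0) (ha : 2 * ‖a‖ ≤ ‖x‖) (hb : 2 * ‖b‖ ≤ ‖x‖) :
    |log ‖(x - a) / (x - b)‖| ≤ 2 * ‖a - b‖ / ‖x‖ := by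
  have hswap := log_norm_div_sub_le hx hb ha
  rw [← inv_div, norm_inv, log_inv, norm_sub_rev b a] at hswap
  exact abs_le.mpr ⟨by linarith, log_norm_div_sub_le hx ha hb⟩

end NormedField

theorem blaschke_factor_integral_small_zero_general (lam : ℂ)
    (ξ : ℝ) (hξ : 0 < ξ) (h : 2 * ‖lam‖ ≤ ξ) :
    ξ * ∫ t in (0:ℝ)..Real.pi, Real.log (‖
        ((ξ : ℂ) * Complex.exp (Complex.I * t) - starRingEnd ℂ lam) /
          ((ξ : ℂ) * Complex.exp (Complex.I * t) - lam)‖)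
      ≤ 4 * Real.pi * ‖lam‖ := by
  have hconj : ‖starRingEnd ℂ lam - lam‖ ≤ 2 * ‖lam‖ := by
    linarith [norm_sub_le (starRingEnd ℂ lam) lam, Complex.norm_conj lam]
  have hbound : ∀ t : ℝ, ‖log ‖((ξ : ℂ) * Complex.exp (Complex.I * t) - starRingEnd ℂ lam) /
      ((ξ : ℂ) * Complex.exp (Complex.I * t) - lam)‖‖ ≤ 4 * ‖lam‖ / ξ := by
    intro t
    have hx : ‖(ξ : ℂ) * Complex.exp (Complex.I * t)‖ = ξ := by
      rw [norm_mul, mul_comm Complex.I, Complex.norm_exp_ofReal_mul_I, Complex.norm_real,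
        norm_of_nonneg hξ.le, mul_one]
    have hx₀ : (ξ : ℂ) * Complex.exp (Complex.I * t) ≠ 0 := by
      rw [← norm_ne_zero_iff, hx]; exact hξ.ne'
    rw [Real.norm_eq_abs]
    refine (abs_log_norm_div_sub_le hx₀ ?_ ?_).trans ?_
    · rwa [hx, Complex.norm_conj]
    · rwa [hx]
    · rw [hx]; exact div_le_div_of_nonneg_right (by linarith) hξ.le
  -- Bounding the absolute value, rather than the integrand, needs no integrability.
  have hint := intervalIntegral.norm_integral_le_of_norm_le_const (a := 0) (b := π)
    fun t _ ↦ hbound t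
  rw [sub_zero, abs_of_pos pi_pos] at hint
  calc ξ * _ ≤ ξ * (4 * ‖lam‖ / ξ * π) :=
        mul_le_mul_of_nonneg_left ((le_abs_self _).trans hint) hξ.le
    _ = 4 * π * ‖lam‖ := by field_simp

theorem blaschke_factor_integral_small_zero (lam : ℂ) (hlam : 0 < lam.im)
    (ξ : ℝ) (hξ : 0 < ξ) (h : 2 * ‖lam‖ ≤ ξ) :
    ξ * ∫ t in (0:ℝ)..Real.pi, Real.log (‖
        ((ξ : ℂ) * Complex.exp (Complex.I * t) - starRingEnd ℂ lam) /
          ((ξ : ℂ) * Complex.exp (Complex.I * t) - lam)‖)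
      ≤ 4 * Real.pi * ‖lam‖ :=
  blaschke_factor_integral_small_zero_general lam ξ hξ h
end
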